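/- Let L be a complex Leibniz superalgebra of nilindex n+m with characteristic sequence C(L) = (n | m₁, m₂, …, m_k), where n = dim L₀, m = m₁+⋯+m_k = dim L₁ and m₁ ≤ m−2. Then L cannot be generated by two elements both belonging to the odd part L₁; i.e., there do not exist y, y′ ∈ L₁ such that the graded subalgebra generated by {y, y′} is all of L. -/

import Mathlib

/-- A complex Leibniz superalgebra: a ℤ₂-graded complex vector space `L = L₀ ⊕ L₁`
with a bilinear bracket satisfying `[L_α, L_β] ⊆ L_{α+β}` and the Leibniz
superidentity `[x,[y,z]] = [[x,y],z] − (−1)^{αβ}[[x,z],y]` for homogeneous `y, z`. -/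
structure LeibnizSuper (L : Type*) [AddCommGroup L] [Module ℂ L] where
  bracket : L →ₗ[ℂ] L →ₗ[ℂ] L
  L0 : Submodule ℂ L
  L1 : Submodule ℂ L
  compl : IsCompl L0 L1
  g00 : ∀ y ∈ L0, ∀ z ∈ L0, bracket y z ∈ L0
  g01 : ∀ y ∈ L0, ∀ z ∈ L1, bracket y z ∈ L1
  g10 : ∀ y ∈ L1, ∀ z ∈ L0, bracket y z ∈ L1
  g11 : ∀ y ∈ L1, ∀ z ∈ L1, bracket y z ∈ L0
  leib00 : ∀ x : L, ∀ y ∈ L0, ∀ z ∈ L0,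
    bracket x (bracket y z) = bracket (bracket x y) z - bracket (bracket x z) y
  leib01 : ∀ x : L, ∀ y ∈ L0, ∀ z ∈ L1,
    bracket x (bracket y z) = bracket (bracket x y) z - bracket (bracket x z) y
  leib10 : ∀ x : L, ∀ y ∈ L1, ∀ z ∈ L0,
    bracket x (bracket y z) = bracket (bracket x y) z - bracket (bracket x z) y
  leib11 : ∀ x : L, ∀ y ∈ L1, ∀ z ∈ L1,
    bracket x (bracket y z) = bracket (bracket x y) z + bracket (bracket x z) y

/-- `HasJordanType f ls` : the nilpotent endomorphism `f` has Jordan blocks of sizes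
given by the decreasing list `ls` (the number of blocks of size `≥ j+1` equals
`rank f^j − rank f^{j+1}`). -/
def HasJordanType {V : Type*} [AddCommGroup V] [Module ℂ V] (f : Module.End ℂ V)
    (ls : List ℕ) : Prop :=
  ls.Pairwise (· ≥ ·) ∧ (∀ a ∈ ls, 0 < a) ∧
  ∀ j : ℕ, ls.countP (fun a => decide (j + 1 ≤ a)) =
    Module.finrank ℂ (LinearMap.range (f ^ j)) -
      Module.finrank ℂ (LinearMap.range (f ^ (j + 1)))

namespace LeibnizSuper

variable {L : Type*} [AddCommGroup L] [Module ℂ L] (S : LeibnizSuper L)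

/-- The span of all brackets `[a,b]`, `a ∈ p`, `b ∈ q`. -/
def bracketSpan (p q : Submodule ℂ L) : Submodule ℂ L :=
  Submodule.span ℂ {z | ∃ a ∈ p, ∃ b ∈ q, z = S.bracket a b}

/-- Descending central series; `S.term k` is `L^{k+1}` (so `S.term 0 = L¹ = L`). -/
def term : ℕ → Submodule ℂ L
  | 0 => ⊤
  | k + 1 => S.bracketSpan (term k) ⊤

/-- `S.HasNilindex s` : `s` is the minimal natural number with `L^s = 0`. -/
def HasNilindex (s : ℕ) : Prop :=
  0 < s ∧ S.term (s - 1) = ⊥ ∧ ∀ t : ℕ, t + 1 < s → S.term t ≠ ⊥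

/-- The superalgebra is nilpotent. -/
def IsNilpotentSuper : Prop := ∃ s, S.term s = ⊥

/-- Right multiplication operator `R_x z = [z, x]`. -/
def R (x : L) : Module.End ℂ L := S.bracket.flip x

/-- Restriction of `R_x` (for `x ∈ L₀`) to the even part `L₀`. -/
def R0 (x : L) (hx : x ∈ S.L0) : Module.End ℂ S.L0 :=
  (S.R x).restrict (fun z hz => S.g00 z hz x hx)

/-- Restriction of `R_x` (for `x ∈ L₀`) to the odd part `L₁`. -/
def R1 (x : L) (hx : x ∈ S.L0) : Module.End ℂ S.L1 :=
  (S.R x).restrict (fun z hz => S.g10 z hz x hx)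

/-- `S.HasCharSeq ns ms` : the characteristic sequence of `S` is `(ns | ms)`, i.e.
`ns` (resp. `ms`) is the lexicographically maximal sequence of Jordan block sizes of
`R_x` restricted to `L₀` (resp. `L₁`) over all `x ∈ L₀ ∖ [L₀, L₀]`. -/
def HasCharSeq (ns ms : List ℕ) : Prop :=
  (∃ x, ∃ hx : x ∈ S.L0, x ∉ S.bracketSpan S.L0 S.L0 ∧ HasJordanType (S.R0 x hx) ns) ∧
  (∀ x, ∀ hx : x ∈ S.L0, x ∉ S.bracketSpan S.L0 S.L0 →
    ∀ ls, HasJordanType (S.R0 x hx) ls → ls = ns ∨ List.Lex (· < ·) ls ns) ∧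
  (∃ x, ∃ hx : x ∈ S.L0, x ∉ S.bracketSpan S.L0 S.L0 ∧ HasJordanType (S.R1 x hx) ms) ∧
  (∀ x, ∀ hx : x ∈ S.L0, x ∉ S.bracketSpan S.L0 S.L0 →
    ∀ ls, HasJordanType (S.R1 x hx) ls → ls = ms ∨ List.Lex (· < ·) ls ms)

/-- `S ∈ ZF^{n,m}` : `S` is zero-filiform with `dim L₀ = n`, `dim L₁ = m`. -/
def ZeroFiliform (n m : ℕ) : Prop :=
  Module.finrank ℂ S.L0 = n ∧ Module.finrank ℂ S.L1 = m ∧ S.HasCharSeq [n] [m]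

/-- A graded subalgebra: a submodule closed under the bracket which is the sum of
its intersections with the even and the odd parts. -/
def IsGradedSubalgebra (p : Submodule ℂ L) : Prop :=
  (∀ a ∈ p, ∀ b ∈ p, S.bracket a b ∈ p) ∧ p = p ⊓ S.L0 ⊔ p ⊓ S.L1

/-- `A` generates the superalgebra: the smallest graded subalgebra containing `A` is `L`. -/
def Generates (A : Set L) : Prop :=
  ∀ p : Submodule ℂ L, S.IsGradedSubalgebra p → A ⊆ p → p = ⊤

/-- An adapted basis `{x₁,…,x_n, y₁,…,y_m}` of a zero-filiform Leibniz superalgebra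
(1-based indexing). -/
def IsAdaptedPair (n m : ℕ) (x y : ℕ → L) : Prop :=
  (∀ i, 1 ≤ i → i ≤ n → x i ∈ S.L0) ∧
  (∀ j, 1 ≤ j → j ≤ m → y j ∈ S.L1) ∧
  LinearIndependent ℂ
    (Sum.elim (fun i : Fin n => x ((i : ℕ) + 1)) (fun j : Fin m => y ((j : ℕ) + 1))) ∧
  Submodule.span ℂ (Set.range
    (Sum.elim (fun i : Fin n => x ((i : ℕ) + 1)) (fun j : Fin m => y ((j : ℕ) + 1)))) = ⊤ ∧
  (∀ i, 1 ≤ i → i ≤ n - 1 → S.bracket (x i) (x 1) = x (i + 1)) ∧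
  S.bracket (x n) (x 1) = 0 ∧
  (∀ i k, 1 ≤ i → i ≤ n → 2 ≤ k → k ≤ n → S.bracket (x i) (x k) = 0) ∧
  (∀ j, 1 ≤ j → j ≤ m - 1 → S.bracket (y j) (x 1) = y (j + 1)) ∧
  S.bracket (y m) (x 1) = 0 ∧
  (∀ j k, 1 ≤ j → j ≤ m → 2 ≤ k → k ≤ n → S.bracket (y j) (x k) = 0)

end LeibnizSuper

/-!
If `L` is generated by odd elements then `L₀ ⊆ L²`, and the lower central series alternates in
parity: from `L^{k+1}` to `L^{k+2}` only the homogeneous component of parity `k + 1` can shrink.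
Counting dimensions against the nilindex `n + m` gives `m ≤ n + 2`, and for the element `x`
realising the characteristic sequence `L^{2j+2} ∩ L₀ = R_x^j L₀` and `L₀ = ℂx ⊕ R_x L₀`.
Elements of `R_x L₀` act trivially from the right, so for odd `a, b` the super-Leibniz identity
reads `R_a R_b + R_b R_a = R_{[b,a]} = N(b,a) R_x`, where `N(a,b)` is the `x`-coordinate of
`[a,b]`. Since `L₀ ⊆ [L₁, L₁] + R_x L₀` and `x ∉ R_x L₀ ⊆ [L₀, L₀]`, the form `N` is nonzero,
and a Clifford-algebra argument shows that `R_x` commutes with every `R_a`.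

Now `m₁ ≤ m - 2` gives `R_x^{m-2} = 0` on `L₁`, whereas the odd layer `L^{2m-3} ∩ L₁` is strictly
larger than `L^{2m-2} ∩ L₁` and, modulo it, is spanned by the vectors `ξ_a = R_x^{m-3}[x,a]`.
Applying `R_x^{m-3}` to the Leibniz identity for `[c,[b,a]]` gives
`N(c,b) ξ_a + N(c,a) ξ_b ∈ L^{2m-2}`, and choosing `ξ_d ∉ L^{2m-2}` this forces `N = 0`.
-/

open Module

theorem List.headI_le_of_lex {l l' : List ℕ} (h : l = l' ∨ List.Lex (· < ·) l l') :
    l.headI ≤ l'.headI := by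
  obtain rfl | h := h
  · rfl
  cases h with
  | nil => exact Nat.zero_le _
  | rel h => exact h.le
  | cons => rfl

theorem sup_inf_eq_left_of_disjoint {α : Type*} [Lattice α] [OrderBot α] [IsModularLattice α]
    {a b c : α} (hac : a ≤ c) (hbc : Disjoint b c) : (a ⊔ b) ⊓ c = a := by
  rw [sup_inf_assoc_of_le b hac, hbc.eq_bot, sup_bot_eq]

theorem commute_of_mul_self_eq_smul {K A : Type*} [Field K] [Ring A] [Algebra K A] {u r t : A}
    {c ν : K} (hc : c ≠ 0) (hu : u * u = c • t) (hur : u * r + r * u = ν • t) :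
    Commute r t := by
  have ht : t = c⁻¹ • (u * u) := by rw [hu, smul_smul, inv_mul_cancel₀ hc, one_smul]
  have htu : t * u = u * t := by rw [ht, smul_mul_assoc, mul_smul_comm, mul_assoc]
  have hru : r * u = ν • t - u * r := eq_sub_of_add_eq' hur
  have hur' : u * r = ν • t - r * u := eq_sub_of_add_eq hur
  have hr : Commute r (u * u) :=
    calc r * (u * u) = r * u * u := (mul_assoc _ _ _).symm
      _ = ν • (u * t) - u * (r * u) := by
        conv_lhs => rw [hru]
        rw [sub_mul, smul_mul_assoc, htu, mul_assoc]
      _ = u * (u * r) := by rw [hur', mul_sub, mul_smul_comm]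
      _ = u * u * r := (mul_assoc _ _ _).symm
  rw [ht]
  exact hr.smul_right _

theorem commute_of_add_mul_eq_smul {ι K A : Type*} [Field K] [CharZero K] [Ring A] [Algebra K A]
    (r : ι → A) (t : A) (N : ι → ι → K) (h : ∀ a b, r a * r b + r b * r a = N a b • t)
    (hN : ∃ a b, N a b ≠ 0) (c : ι) : Commute (r c) t := by
  have hsq (a : ι) : r a * r a = (N a a / 2) • t := by
    rw [div_eq_inv_mul, mul_smul, ← h a a, ← two_smul K, smul_smul, inv_mul_cancel₀ two_ne_zero,
      one_smul]
  -- one of `r a`, `r b`, `r a + r b` squares to a nonzero multiple of `t`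
  obtain ⟨a, b, hab⟩ := hN
  by_cases ha : N a a = 0
  · by_cases hb : N b b = 0
    · refine commute_of_mul_self_eq_smul (u := r a + r b) (ν := N a c + N b c) hab ?_ ?_
      · rw [add_mul, mul_add, mul_add, hsq, hsq, ha, hb, ← h a b]
        simp
      · rw [add_smul, ← h a c, ← h b c]
        noncomm_ring
    · exact commute_of_mul_self_eq_smul (div_ne_zero hb two_ne_zero) (hsq b) (h b c)
  · exact commute_of_mul_self_eq_smul (div_ne_zero ha two_ne_zero) (hsq a) (h a c)

namespace Module.End

open LinearMap

variable {V : Type*} [AddCommGroup V] [Module ℂ V] (f : Module.End ℂ V)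

theorem range_pow_succ (j : ℕ) : range (f ^ (j + 1)) = (range (f ^ j)).map f := by
  rw [pow_succ', Module.End.mul_eq_comp, range_comp]

theorem range_pow_succ_le (j : ℕ) : range (f ^ (j + 1)) ≤ range (f ^ j) := by
  rw [pow_succ, Module.End.mul_eq_comp]
  exact range_comp_le_range _ _

theorem finrank_range_pow_eq_add [FiniteDimensional ℂ V] (j : ℕ) :
    finrank ℂ (range (f ^ j)) =
      finrank ℂ (range (f ^ (j + 1))) + finrank ℂ ↥(range (f ^ j) ⊓ ker f) := by
  have := (f.domRestrict (range (f ^ j))).finrank_range_add_finrank_ker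
  rw [range_domRestrict, ← range_pow_succ, ker_domRestrict, ← Submodule.finrank_map_subtype_eq,
    Submodule.map_comap_subtype] at this
  rw [this]

/-- The number of Jordan blocks of `f` of size `> j`. -/
noncomputable def blockCount (j : ℕ) : ℕ := finrank ℂ ↥(range (f ^ j) ⊓ ker f)

theorem blockCount_antitone [FiniteDimensional ℂ V] : Antitone f.blockCount :=
  antitone_nat_of_succ_le fun j =>
    Submodule.finrank_mono (inf_le_inf_right _ (f.range_pow_succ_le j))

theorem eq_bot_of_inf_ker_eq_bot (hf : IsNilpotent f) {p : Submodule ℂ V} (hp : p.map f ≤ p)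
    (h : p ⊓ ker f = ⊥) : p = ⊥ := by
  obtain ⟨N, hN⟩ := hf
  have key : ∀ k, ∀ v ∈ p, (f ^ k) v = 0 → v = 0 := by
    intro k
    induction k with
    | zero => simp
    | succ k ih =>
      intro v hv hk
      rw [pow_succ, Module.End.mul_apply] at hk
      have hfv : f v = 0 := ih (f v) (hp ⟨v, hv, rfl⟩) hk
      have hv' : v ∈ p ⊓ ker f := ⟨hv, hfv⟩
      rwa [h, Submodule.mem_bot] at hv'
  exact eq_bot_iff.mpr fun v hv => (Submodule.mem_bot ℂ).mpr (key N v hv (by simp [hN]))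

theorem blockCount_pos_iff [FiniteDimensional ℂ V] (hf : IsNilpotent f) (j : ℕ) :
    0 < f.blockCount j ↔ f ^ j ≠ 0 := by
  rw [blockCount, Nat.pos_iff_ne_zero, Ne, Submodule.finrank_eq_zero, Ne, ← range_eq_bot]
  refine not_congr ⟨fun h => f.eq_bot_of_inf_ker_eq_bot hf ?_ h, fun h => by simp [h]⟩
  rw [← range_pow_succ]
  exact f.range_pow_succ_le j

/-- For `f ^ N = 0`, the size of the `i`-th Jordan block of `f`, counted from `0`. -/
noncomputable def blockSize (N i : ℕ) : ℕ :=
  ((Finset.range N).filter fun t => i < f.blockCount t).card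

theorem lt_blockSize_iff [FiniteDimensional ℂ V] {N : ℕ} (hN : f ^ N = 0) (i j : ℕ) :
    j < f.blockSize N i ↔ i < f.blockCount j := by
  have hanti := f.blockCount_antitone
  constructor
  · intro h
    by_contra! hij
    have hsub : (Finset.range N).filter (fun t => i < f.blockCount t) ⊆ Finset.range j :=
      fun t ht => by
        simp only [Finset.mem_filter, Finset.mem_range] at ht ⊢
        by_contra! htj
        exact absurd (hanti htj) (by omega)
    have := Finset.card_le_card hsub
    rw [Finset.card_range] at this
    exact absurd h (by unfold blockSize; omega)
  · intro h
    have hjN : j < N := by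
      by_contra! hjN
      exact (f.blockCount_pos_iff ⟨N, hN⟩ j).mp (by omega) (pow_eq_zero_of_le hjN hN)
    have hsub : Finset.range (j + 1) ⊆ (Finset.range N).filter (fun t => i < f.blockCount t) :=
      fun t ht => by
        simp only [Finset.mem_filter, Finset.mem_range] at ht ⊢
        exact ⟨by omega, lt_of_lt_of_le h (hanti (Nat.le_of_lt_succ ht))⟩
    have := Finset.card_le_card hsub
    rw [Finset.card_range] at this
    unfold blockSize
    omega

noncomputable def jordanType (N : ℕ) : List ℕ :=
  (List.range (f.blockCount 0)).map (f.blockSize N)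

theorem hasJordanType_jordanType [FiniteDimensional ℂ V] {N : ℕ} (hN : f ^ N = 0) :
    HasJordanType f (f.jordanType N) := by
  have hanti := f.blockCount_antitone
  refine ⟨?_, ?_, fun j => ?_⟩
  · refine List.pairwise_map.mpr (List.pairwise_lt_range.imp fun {i i'} h => ?_)
    exact Finset.card_le_card (Finset.monotone_filter_right _ fun t _ ht => by omega)
  · simp only [jordanType, List.mem_map, List.mem_range]
    rintro _ ⟨i, hi, rfl⟩
    exact (f.lt_blockSize_iff hN i 0).mpr hi
  · have hcount (n : ℕ) : (List.range n).countP
        ((fun a => decide (j + 1 ≤ a)) ∘ f.blockSize N) = min n (f.blockCount j) := by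
      induction n with
      | zero => simp
      | succ n ih =>
        rw [List.range_succ, List.countP_append, ih]
        by_cases h : n < f.blockCount j <;> simp [f.lt_blockSize_iff hN, h] <;> omega
    rw [jordanType, List.countP_map, hcount, min_eq_right (hanti (Nat.zero_le j)),
      f.finrank_range_pow_eq_add j, Nat.add_sub_cancel_left, blockCount]

theorem lt_headI_jordanType [FiniteDimensional ℂ V] {N k : ℕ} (hN : f ^ N = 0) (hk : f ^ k ≠ 0) :
    k < (f.jordanType N).headI := by
  have h0 : 0 < f.blockCount 0 := by
    refine (f.blockCount_pos_iff ⟨N, hN⟩ 0).mpr fun h => hk ?_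
    ext v
    have hv : v = 0 := by simpa using congrArg (· v) h
    simp [hv]
  obtain ⟨c, hc⟩ : ∃ c, f.blockCount 0 = c + 1 := ⟨f.blockCount 0 - 1, by omega⟩
  rw [jordanType, hc, List.range_succ_eq_map, List.map_cons, List.headI_cons, f.lt_blockSize_iff hN]
  exact (f.blockCount_pos_iff ⟨N, hN⟩ k).mpr hk

theorem pow_headI_eq_zero [FiniteDimensional ℂ V] (hf : IsNilpotent f) {ms : List ℕ}
    (hmax : ∀ ls, HasJordanType f ls → ls = ms ∨ List.Lex (· < ·) ls ms) :
    f ^ ms.headI = 0 := by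
  by_contra h
  obtain ⟨N, hN⟩ := hf
  have := List.headI_le_of_lex (hmax _ (f.hasJordanType_jordanType hN))
  have := f.lt_headI_jordanType hN h
  omega

end Module.End

theorem Module.End.le_span_range_pow_apply {K V : Type*} [Field K] [AddCommGroup V] [Module K V]
    {f : Module.End K V} {p : Submodule K V} {x : V} {k : ℕ}
    (h : p ≤ K ∙ x ⊔ p.map f) (hk : p.map (f ^ k) = ⊥) :
    p ≤ Submodule.span K (Set.range fun s => (f ^ s) x) := by
  set O := Submodule.span K (Set.range fun s => (f ^ s) x)
  suffices ∀ k, p ≤ O ⊔ p.map (f ^ k) by simpa [hk] using this k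
  intro k
  induction k with
  | zero =>
    rw [pow_zero, Module.End.one_eq_id, Submodule.map_id]
    exact le_sup_right
  | succ k ih =>
    calc p ≤ O ⊔ p.map (f ^ k) := ih
      _ ≤ O ⊔ (K ∙ x ⊔ p.map f).map (f ^ k) := sup_le_sup_left (Submodule.map_mono h) _
      _ = O ⊔ (K ∙ (f ^ k) x ⊔ p.map (f ^ (k + 1))) := by
        rw [Submodule.map_sup, Submodule.map_span, Set.image_singleton, ← Submodule.map_comp,
          ← Module.End.mul_eq_comp, ← pow_succ]
      _ ≤ O ⊔ p.map (f ^ (k + 1)) := by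
        rw [← sup_assoc]
        have hxk : K ∙ (f ^ k) x ≤ O := (Submodule.span_singleton_le_iff_mem _ _).mpr
          (Submodule.subset_span (Set.mem_range_self (f := fun s => (f ^ s) x) k))
        exact sup_le_sup_right (sup_le le_rfl hxk) _

theorem HasJordanType.finrank_range_pow {V : Type*} [AddCommGroup V] [Module ℂ V]
    [FiniteDimensional ℂ V] {f : Module.End ℂ V} {n : ℕ} (h : HasJordanType f [n])
    (hV : finrank ℂ V = n) (j : ℕ) : finrank ℂ (LinearMap.range (f ^ j)) = n - j := by
  induction j with
  | zero => rw [pow_zero, Module.End.one_eq_id, LinearMap.range_id, finrank_top, hV, Nat.sub_zero]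
  | succ j ih =>
    have hj := h.2.2 j
    have hle := Submodule.finrank_mono (f.range_pow_succ_le j)
    simp only [List.countP_cons, List.countP_nil, decide_eq_true_eq] at hj
    split_ifs at hj <;> omega

namespace LeibnizSuper

variable {L : Type*} [AddCommGroup L] [Module ℂ L] (S : LeibnizSuper L)

section Grading

def homog (i : ℕ) : Submodule ℂ L := if Even i then S.L0 else S.L1

theorem homog_of_even {i : ℕ} (hi : Even i) : S.homog i = S.L0 := if_pos hi

theorem homog_of_not_even {i : ℕ} (hi : ¬Even i) : S.homog i = S.L1 := if_neg hi

@[simp] theorem homog_zero : S.homog 0 = S.L0 := S.homog_of_even (by decide)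

@[simp] theorem homog_one : S.homog 1 = S.L1 := S.homog_of_not_even Nat.not_even_one

theorem homog_add_two (i : ℕ) : S.homog (i + 2) = S.homog i := by
  simp [homog, Nat.even_add]

theorem homog_eq_or (r i : ℕ) : S.homog r = S.homog i ∨ S.homog r = S.homog (i + 1) := by
  by_cases hr : Even r <;> by_cases hi : Even i <;> simp [homog, hr, hi, Nat.even_add_one]

theorem isCompl_homog (i : ℕ) : IsCompl (S.homog i) (S.homog (i + 1)) := by
  by_cases hi : Even i
  · rw [S.homog_of_even hi, S.homog_of_not_even (by simpa [Nat.even_add_one] using hi)]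
    exact S.compl
  · rw [S.homog_of_not_even hi, S.homog_of_even (Nat.even_add_one.mpr hi)]
    exact S.compl.symm

theorem bracket_mem_homog {a b : L} {i j : ℕ} (ha : a ∈ S.homog i) (hb : b ∈ S.homog j) :
    S.bracket a b ∈ S.homog (i + j) := by
  by_cases hi : Even i <;> by_cases hj : Even j <;>
    simp only [homog, hi, hj, Nat.even_add, if_true, if_false, iff_self, iff_false, false_iff,
      not_true_eq_false] at ha hb ⊢
  · exact S.g00 a ha b hb
  · exact S.g01 a ha b hb
  · exact S.g10 a ha b hb
  · exact S.g11 a ha b hb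

theorem R_apply (x v : L) : S.R x v = S.bracket v x := rfl

theorem R_bracket {u v : L} {i j : ℕ} (hu : u ∈ S.homog i) (hv : v ∈ S.homog j) :
    S.R (S.bracket u v) = S.R v * S.R u - (-1 : ℂ) ^ (i * j) • (S.R u * S.R v) := by
  ext a
  simp only [R_apply, Module.End.mul_apply, LinearMap.sub_apply, LinearMap.smul_apply]
  by_cases hi : Even i <;> by_cases hj : Even j
  · rw [(Nat.even_mul.mpr (Or.inl hi)).neg_one_pow, one_smul]
    simp only [homog, hi, hj, if_true] at hu hv
    exact S.leib00 a u hu v hv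
  · rw [(Nat.even_mul.mpr (Or.inl hi)).neg_one_pow, one_smul]
    simp only [homog, hi, hj, if_true, if_false] at hu hv
    exact S.leib01 a u hu v hv
  · rw [(Nat.even_mul.mpr (Or.inr hj)).neg_one_pow, one_smul]
    simp only [homog, hi, hj, if_true, if_false] at hu hv
    exact S.leib10 a u hu v hv
  · rw [(Nat.odd_mul.mpr ⟨Nat.not_even_iff_odd.mp hi, Nat.not_even_iff_odd.mp hj⟩).neg_one_pow,
      neg_one_smul, sub_neg_eq_add]
    simp only [homog, hi, hj, if_false] at hu hv
    exact S.leib11 a u hu v hv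

theorem R_anticomm {a b : L} (ha : a ∈ S.L1) (hb : b ∈ S.L1) :
    S.R a * S.R b + S.R b * S.R a = S.R (S.bracket b a) := by
  rw [S.R_bracket (i := 1) (j := 1) (by simpa using hb) (by simpa using ha)]
  simp

theorem R_pow_mem_homog {x v : L} {i : ℕ} (hx : x ∈ S.L0) (hv : v ∈ S.homog i) (k : ℕ) :
    (S.R x ^ k) v ∈ S.homog i :=
  Module.End.pow_apply_mem_of_forall_mem k
    (fun w hw => by simpa [R_apply] using S.bracket_mem_homog (j := 0) hw (by simpa using hx)) v hv

end Grading

section LowerCentralSeries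

theorem bracket_mem_bracketSpan {p q : Submodule ℂ L} {a b : L} (ha : a ∈ p) (hb : b ∈ q) :
    S.bracket a b ∈ S.bracketSpan p q :=
  Submodule.subset_span ⟨a, ha, b, hb, rfl⟩

theorem bracketSpan_le {p q r : Submodule ℂ L} :
    S.bracketSpan p q ≤ r ↔ ∀ a ∈ p, ∀ b ∈ q, S.bracket a b ∈ r := by
  refine ⟨fun h a ha b hb => h (S.bracket_mem_bracketSpan ha hb), fun h => ?_⟩
  refine Submodule.span_le.mpr ?_
  rintro _ ⟨a, ha, b, hb, rfl⟩
  exact h a ha b hb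

theorem term_zero : S.term 0 = ⊤ := rfl

theorem term_succ (k : ℕ) : S.term (k + 1) = S.bracketSpan (S.term k) ⊤ := rfl

theorem bracket_mem_term_succ {k : ℕ} {a : L} (ha : a ∈ S.term k) (b : L) :
    S.bracket a b ∈ S.term (k + 1) :=
  S.bracket_mem_bracketSpan ha Submodule.mem_top

theorem term_succ_le (k : ℕ) : S.term (k + 1) ≤ S.term k := by
  induction k with
  | zero => exact le_top
  | succ k ih => exact S.bracketSpan_le.mpr fun a ha b _ => S.bracket_mem_term_succ (ih ha) b

theorem term_antitone : Antitone S.term :=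
  antitone_nat_of_succ_le S.term_succ_le

theorem bracketSpan_top_le {p r : Submodule ℂ L} (hp : p ≤ p ⊓ S.homog 0 ⊔ p ⊓ S.homog 1)
    (h : ∀ i j : ℕ, ∀ u ∈ p ⊓ S.homog i, ∀ v ∈ S.homog j, S.bracket u v ∈ r) :
    S.bracketSpan p ⊤ ≤ r := by
  refine S.bracketSpan_le.mpr fun a ha b _ => ?_
  obtain ⟨a₀, ha₀, a₁, ha₁, rfl⟩ := Submodule.mem_sup.mp (hp ha)
  obtain ⟨b₀, hb₀, b₁, hb₁, rfl⟩ :=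
    Submodule.mem_sup.mp ((S.isCompl_homog 0).sup_eq_top ▸ Submodule.mem_top : b ∈ _)
  simp only [map_add, LinearMap.add_apply]
  exact add_mem (add_mem (h _ _ _ ha₀ _ hb₀) (h _ _ _ ha₁ _ hb₀))
    (add_mem (h _ _ _ ha₀ _ hb₁) (h _ _ _ ha₁ _ hb₁))

theorem term_eq_sup_inf_homog (k i : ℕ) :
    S.term k = S.term k ⊓ S.homog i ⊔ S.term k ⊓ S.homog (i + 1) := by
  refine le_antisymm ?_ (sup_le inf_le_left inf_le_left)
  induction k generalizing i with
  | zero => simp [term_zero, (S.isCompl_homog i).sup_eq_top]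
  | succ k ih =>
    refine S.bracketSpan_top_le (ih 0) fun i' j u hu v hv => ?_
    have hmem : S.bracket u v ∈ S.term (k + 1) ⊓ S.homog (i' + j) :=
      ⟨S.bracket_mem_term_succ hu.1 v, S.bracket_mem_homog hu.2 hv⟩
    rcases S.homog_eq_or (i' + j) i with h | h <;> rw [h] at hmem
    · exact Submodule.mem_sup_left hmem
    · exact Submodule.mem_sup_right hmem

theorem bracket_mem_term {i j : ℕ} {a b : L} (ha : a ∈ S.term i) (hb : b ∈ S.term j) :
    S.bracket a b ∈ S.term (i + j + 1) := by
  induction j generalizing i a b with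
  | zero => exact S.bracket_mem_term_succ ha b
  | succ j ih =>
    suffices S.term (j + 1) ≤ (S.term (i + (j + 1) + 1)).comap (S.bracket a) from this hb
    refine S.bracketSpan_top_le (S.term_eq_sup_inf_homog j 0).le fun p q u hu v hv => ?_
    rw [Submodule.mem_comap, ← R_apply, S.R_bracket hu.2 hv]
    simp only [LinearMap.sub_apply, LinearMap.smul_apply, Module.End.mul_apply, R_apply]
    refine sub_mem (S.bracket_mem_term_succ (ih ha hu.1) v) (Submodule.smul_mem _ _ ?_)
    exact S.term_antitone (by omega : i + (j + 1) + 1 ≤ i + 1 + j + 1)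
      (ih (S.bracket_mem_term_succ ha v) hu.1)

theorem R_pow_mem_term {x v : L} {i : ℕ} (hx : x ∈ S.term 1) (hv : v ∈ S.term i) (k : ℕ) :
    (S.R x ^ k) v ∈ S.term (i + 2 * k) := by
  induction k with
  | zero => simpa using hv
  | succ k ih =>
    rw [pow_succ', Module.End.mul_apply, R_apply, Nat.mul_succ, ← add_assoc]
    exact S.bracket_mem_term ih hx

variable {S} in
theorem HasNilindex.term_succ_lt {s : ℕ} (hnil : S.HasNilindex s) {k : ℕ} (hk : k + 2 ≤ s) :
    S.term (k + 1) < S.term k := by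
  refine lt_of_le_of_ne (S.term_succ_le k) fun heq => hnil.2.2 k (by omega) ?_
  have hconst : ∀ t, S.term (k + t) = S.term k := by
    intro t
    induction t with
    | zero => rfl
    | succ t ih => rw [← add_assoc, term_succ, ih, ← term_succ, heq]
  rw [← hconst (s - 1 - k), show k + (s - 1 - k) = s - 1 by omega]
  exact hnil.2.1

variable {S} in
theorem HasNilindex.term_eq_bot {s : ℕ} (hnil : S.HasNilindex s) {k : ℕ} (hk : s ≤ k + 1) :
    S.term k = ⊥ :=
  eq_bot_iff.mpr (hnil.2.1 ▸ S.term_antitone (by omega))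

end LowerCentralSeries

section OddGeneration

theorem L0_le_term_one_of_generates {A : Set L} (hA : A ⊆ S.L1) (h : S.Generates A) :
    S.L0 ≤ S.term 1 := by
  have hsplit := S.term_eq_sup_inf_homog 1 0
  simp only [homog_zero, zero_add, homog_one] at hsplit
  have htop : S.term 1 ⊓ S.L0 ⊔ S.L1 = ⊤ := by
    refine h _ ⟨fun a _ b _ => ?_, ?_⟩ (hA.trans (SetLike.coe_subset_coe.mpr le_sup_right))
    · have hab := S.bracket_mem_term_succ (k := 0) (Submodule.mem_top : a ∈ ⊤) b
      rw [hsplit] at hab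
      exact (sup_le_sup_left (inf_le_right : S.term 1 ⊓ S.L1 ≤ S.L1) _) hab
    · exact le_antisymm (sup_le_sup (le_inf le_sup_left inf_le_right) (le_inf le_sup_right le_rfl))
        (sup_le inf_le_left inf_le_left)
  calc S.L0 = (S.term 1 ⊓ S.L0 ⊔ S.L1) ⊓ S.L0 := by rw [htop, top_inf_eq]
    _ = S.term 1 ⊓ S.L0 := sup_inf_eq_left_of_disjoint inf_le_right S.compl.disjoint.symm
    _ ≤ S.term 1 := inf_le_left

theorem top_le_L1_sup_term_one (hL0 : S.L0 ≤ S.term 1) : ⊤ ≤ S.L1 ⊔ S.term 1 := by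
  rw [← S.compl.sup_eq_top]
  exact sup_le (hL0.trans le_sup_right) le_sup_left

theorem term_succ_inf_homog_le (hL0 : S.L0 ≤ S.term 1) (k i : ℕ) :
    S.term (k + 1) ⊓ S.homog i ≤
      S.bracketSpan (S.term k ⊓ S.homog (i + 1)) S.L1 ⊔ S.term (k + 2) ⊓ S.homog i := by
  set P := S.bracketSpan (S.term k ⊓ S.homog (i + 1)) S.L1 ⊔ S.term (k + 2) ⊓ S.homog i
  have hP : P ≤ S.homog i := by
    refine sup_le (S.bracketSpan_le.mpr fun a ha b hb => ?_) inf_le_right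
    rw [← S.homog_add_two i]
    exact S.bracket_mem_homog (j := 1) ha.2 (by simpa using hb)
  have hsplit : S.term (k + 1) ≤ P ⊔ S.homog (i + 1) := by
    refine S.bracketSpan_le.mpr fun a ha b _ => ?_
    obtain ⟨a₀, ha₀, a₁, ha₁, rfl⟩ := Submodule.mem_sup.mp ((S.term_eq_sup_inf_homog k i).le ha)
    obtain ⟨b₁, hb₁, b', hb', rfl⟩ := Submodule.mem_sup.mp (S.top_le_L1_sup_term_one hL0
      (Submodule.mem_top : b ∈ ⊤))
    have hdeep : S.bracket (a₀ + a₁) b' ∈ S.term (k + 2) := S.bracket_mem_term ha hb'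
    rw [S.term_eq_sup_inf_homog (k + 2) i] at hdeep
    rw [map_add (S.bracket (a₀ + a₁)) b₁ b']
    refine add_mem ?_ ((sup_le_sup le_sup_right inf_le_right :
      S.term (k + 2) ⊓ S.homog i ⊔ S.term (k + 2) ⊓ S.homog (i + 1) ≤ P ⊔ S.homog (i + 1)) hdeep)
    rw [map_add, LinearMap.add_apply]
    refine add_mem (Submodule.mem_sup_right ?_) ?_
    · exact S.bracket_mem_homog (j := 1) ha₀.2 (by simpa using hb₁)
    · exact Submodule.mem_sup_left (Submodule.mem_sup_left (S.bracket_mem_bracketSpan ha₁ hb₁))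
  calc S.term (k + 1) ⊓ S.homog i ≤ (P ⊔ S.homog (i + 1)) ⊓ S.homog i :=
        inf_le_inf_right _ hsplit
    _ = P := sup_inf_eq_left_of_disjoint hP (S.isCompl_homog i).disjoint.symm

theorem term_inf_homog_le_term_succ (hL0 : S.L0 ≤ S.term 1) (k : ℕ) :
    S.term k ⊓ S.homog k ≤ S.term (k + 1) := by
  induction k with
  | zero => simpa [term_zero] using hL0
  | succ k ih =>
    refine (S.term_succ_inf_homog_le hL0 k (k + 1)).trans (sup_le ?_ inf_le_left)
    refine S.bracketSpan_le.mpr fun a ha b _ => S.bracket_mem_term_succ (ih ?_) b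
    exact ⟨ha.1, S.homog_add_two k ▸ ha.2⟩

theorem term_succ_inf_homog_eq (hL0 : S.L0 ≤ S.term 1) (k : ℕ) :
    S.term (k + 1) ⊓ S.homog k = S.term k ⊓ S.homog k :=
  le_antisymm (inf_le_inf_right _ (S.term_succ_le k))
    (le_inf (S.term_inf_homog_le_term_succ hL0 k) inf_le_right)

theorem map_R_pow_L0_le {x : L} (hL0 : S.L0 ≤ S.term 1) (hx : x ∈ S.L0) (j : ℕ) :
    S.L0.map (S.R x ^ j) ≤ S.term (2 * j + 1) ⊓ S.L0 := by
  rintro _ ⟨v, hv, rfl⟩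
  refine ⟨?_, by simpa using S.R_pow_mem_homog (i := 0) hx (by simpa using hv) j⟩
  simpa [add_comm] using S.R_pow_mem_term (hL0 hx) (hL0 hv) j

theorem map_R_le_bracketSpan {x : L} (hx : x ∈ S.L0) :
    S.L0.map (S.R x) ≤ S.bracketSpan S.L0 S.L0 := by
  rintro _ ⟨v, hv, rfl⟩
  exact S.bracket_mem_bracketSpan hv hx

end OddGeneration

section Dimension

variable [FiniteDimensional ℂ L]

theorem finrank_term_eq_add (k i : ℕ) :
    finrank ℂ (S.term k) =
      finrank ℂ ↥(S.term k ⊓ S.homog i) + finrank ℂ ↥(S.term k ⊓ S.homog (i + 1)) := by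
  have h := Submodule.finrank_sup_add_finrank_inf_eq (S.term k ⊓ S.homog i)
    (S.term k ⊓ S.homog (i + 1))
  have hdisj : Disjoint (S.term k ⊓ S.homog i) (S.term k ⊓ S.homog (i + 1)) :=
    (S.isCompl_homog i).disjoint.mono inf_le_right inf_le_right
  rwa [← S.term_eq_sup_inf_homog k i, hdisj.eq_bot, finrank_bot, add_zero] at h

theorem term_succ_inf_homog_lt (hL0 : S.L0 ≤ S.term 1) {s : ℕ} (hnil : S.HasNilindex s) {k : ℕ}
    (hk : k + 2 ≤ s) : S.term (k + 1) ⊓ S.homog (k + 1) < S.term k ⊓ S.homog (k + 1) := by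
  refine Submodule.lt_of_le_of_finrank_lt_finrank (inf_le_inf_right _ (S.term_succ_le k)) ?_
  have hlt := Submodule.finrank_lt_finrank_of_lt (hnil.term_succ_lt hk)
  have h := S.finrank_term_eq_add k k
  have h' := S.finrank_term_eq_add (k + 1) k
  rw [S.term_succ_inf_homog_eq hL0 k] at h'
  omega

theorem finrank_term_inf_L0_add_le (hL0 : S.L0 ≤ S.term 1) {s : ℕ} (hnil : S.HasNilindex s)
    {j : ℕ} (hj : 2 * j + 1 < s) : finrank ℂ ↥(S.term (2 * j + 1) ⊓ S.L0) + j ≤ finrank ℂ S.L0 := by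
  induction j with
  | zero => rw [Nat.mul_zero, Nat.zero_add, inf_eq_right.mpr hL0, Nat.add_zero]
  | succ j ih =>
    have hlt := S.term_succ_inf_homog_lt hL0 hnil (k := 2 * j + 1) (by omega)
    have heq := S.term_succ_inf_homog_eq hL0 (2 * j + 1 + 1)
    rw [S.homog_of_even ⟨j + 1, by ring⟩] at hlt heq
    rw [show 2 * (j + 1) + 1 = 2 * j + 1 + 1 + 1 by ring, heq]
    have := Submodule.finrank_lt_finrank_of_lt hlt
    have := ih (by omega)
    omega

variable {S} in
theorem HasNilindex.le_two_mul_finrank_add_two (hL0 : S.L0 ≤ S.term 1) {s : ℕ}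
    (hnil : S.HasNilindex s) : s ≤ 2 * finrank ℂ S.L0 + 2 := by
  by_contra! hs
  have h := S.finrank_term_inf_L0_add_le hL0 hnil (j := finrank ℂ S.L0) (by omega)
  have hlt := S.term_succ_inf_homog_lt hL0 hnil (k := 2 * finrank ℂ S.L0 + 1) (by omega)
  rw [S.homog_of_even ⟨finrank ℂ S.L0 + 1, by ring⟩] at hlt
  have := Submodule.finrank_lt_finrank_of_lt hlt
  omega

end Dimension

section Regular

variable [FiniteDimensional ℂ L] {x : L}

theorem L0_eq_span_sup_map (hx : x ∈ S.L0) (hxnot : x ∉ S.bracketSpan S.L0 S.L0)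
    (hreg : ∀ k, finrank ℂ (S.L0.map (S.R x ^ k)) = finrank ℂ S.L0 - k) :
    S.L0 = ℂ ∙ x ⊔ S.L0.map (S.R x) := by
  have hx0 : x ≠ 0 := by
    rintro rfl
    exact hxnot (zero_mem _)
  have hxL0 : ℂ ∙ x ≤ S.L0 := (Submodule.span_singleton_le_iff_mem _ _).mpr hx
  have hle : ℂ ∙ x ⊔ S.L0.map (S.R x) ≤ S.L0 := by
    refine sup_le hxL0 ?_
    rintro _ ⟨v, hv, rfl⟩
    simpa using S.R_pow_mem_homog (i := 0) hx (by simpa using hv) 1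
  refine (Submodule.eq_of_le_of_finrank_le hle ?_).symm
  have hdisj : Disjoint (S.L0.map (S.R x)) (ℂ ∙ x) :=
    (Submodule.disjoint_span_singleton' hx0).mpr fun h => hxnot (S.map_R_le_bracketSpan hx h)
  have h := Submodule.finrank_sup_add_finrank_inf_eq (ℂ ∙ x) (S.L0.map (S.R x))
  have h1 := Submodule.finrank_mono hxL0
  have h2 := hreg 1
  rw [inf_comm, hdisj.eq_bot, finrank_bot, finrank_span_singleton hx0] at h
  rw [finrank_span_singleton hx0] at h1
  rw [pow_one] at h2
  omega

theorem R_eq_zero_of_mem_map (hx : x ∈ S.L0) (hxnot : x ∉ S.bracketSpan S.L0 S.L0)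
    (hreg : ∀ k, finrank ℂ (S.L0.map (S.R x ^ k)) = finrank ℂ S.L0 - k) {w : L}
    (hw : w ∈ S.L0.map (S.R x)) : S.R w = 0 := by
  have hcyc : S.L0 ≤ Submodule.span ℂ (Set.range fun s => (S.R x ^ s) x) :=
    Module.End.le_span_range_pow_apply (S.L0_eq_span_sup_map hx hxnot hreg).le
      (k := finrank ℂ S.L0) (by rw [← Submodule.finrank_eq_zero, hreg, Nat.sub_self])
  have hx0 : x ∈ S.homog 0 := by simpa using hx
  have hR (s : ℕ) : S.R ((S.R x ^ (s + 1)) x) = 0 := by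
    induction s with
    | zero =>
      rw [zero_add, pow_one, R_apply, S.R_bracket hx0 hx0]
      simp
    | succ s ih =>
      rw [pow_succ', Module.End.mul_apply, R_apply,
        S.R_bracket (S.R_pow_mem_homog hx hx0 _) hx0, ih]
      simp
  have hker : S.L0.map (S.R x) ≤ LinearMap.ker S.bracket.flip := by
    rw [Submodule.map_le_iff_le_comap]
    refine hcyc.trans (Submodule.span_le.mpr ?_)
    rintro _ ⟨s, rfl⟩
    rw [SetLike.mem_coe, Submodule.mem_comap, LinearMap.mem_ker, ← Module.End.mul_apply,
      ← pow_succ']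
    exact hR s
  exact hker hw

theorem exists_sub_smul_mem_map (hx : x ∈ S.L0) (hxnot : x ∉ S.bracketSpan S.L0 S.L0)
    (hreg : ∀ k, finrank ℂ (S.L0.map (S.R x ^ k)) = finrank ℂ S.L0 - k) {v : L}
    (hv : v ∈ S.L0) : ∃ c : ℂ, v - c • x ∈ S.L0.map (S.R x) := by
  rw [S.L0_eq_span_sup_map hx hxnot hreg] at hv
  obtain ⟨_, hc, w, hw, rfl⟩ := Submodule.mem_sup.mp hv
  obtain ⟨c, rfl⟩ := Submodule.mem_span_singleton.mp hc
  exact ⟨c, by simpa using hw⟩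

theorem R_eq_smul_of_sub_smul_mem (hx : x ∈ S.L0) (hxnot : x ∉ S.bracketSpan S.L0 S.L0)
    (hreg : ∀ k, finrank ℂ (S.L0.map (S.R x ^ k)) = finrank ℂ S.L0 - k) {v : L} {c : ℂ}
    (hv : v - c • x ∈ S.L0.map (S.R x)) : S.R v = c • S.R x := by
  have h := S.R_eq_zero_of_mem_map hx hxnot hreg hv
  simp only [R, map_sub, map_smul] at h
  exact sub_eq_zero.mp h

theorem term_inf_L0_eq_map_pow (hL0 : S.L0 ≤ S.term 1) {s : ℕ} (hnil : S.HasNilindex s)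
    (hx : x ∈ S.L0) (hreg : ∀ k, finrank ℂ (S.L0.map (S.R x ^ k)) = finrank ℂ S.L0 - k)
    {j : ℕ} (hj : 2 * j + 1 < s) : S.term (2 * j + 1) ⊓ S.L0 = S.L0.map (S.R x ^ j) := by
  refine (Submodule.eq_of_le_of_finrank_le (S.map_R_pow_L0_le hL0 hx j) ?_).symm
  have := S.finrank_term_inf_L0_add_le hL0 hnil hj
  rw [hreg]
  omega

theorem exists_bracket_not_mem_map (hL0 : S.L0 ≤ S.term 1) {s : ℕ} (hnil : S.HasNilindex s)
    (hs : 3 < s) (hx : x ∈ S.L0) (hxnot : x ∉ S.bracketSpan S.L0 S.L0)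
    (hreg : ∀ k, finrank ℂ (S.L0.map (S.R x ^ k)) = finrank ℂ S.L0 - k) :
    ∃ a ∈ S.L1, ∃ b ∈ S.L1, S.bracket a b ∉ S.L0.map (S.R x) := by
  by_contra! h
  refine hxnot (S.map_R_le_bracketSpan hx ?_)
  have hsq : S.bracketSpan (S.term 0 ⊓ S.homog 1) S.L1 ≤ S.L0.map (S.R x) :=
    S.bracketSpan_le.mpr fun a ha b hb => h a (by simpa using ha.2) b hb
  have hdeep : S.term 2 ⊓ S.homog 0 = S.L0.map (S.R x) := by
    rw [← S.homog_add_two 0, ← S.term_succ_inf_homog_eq hL0 2, S.homog_add_two, homog_zero,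
      ← pow_one (S.R x)]
    exact S.term_inf_L0_eq_map_pow hL0 hnil hx hreg (j := 1) hs
  have hx' : x ∈ S.term 1 ⊓ S.homog 0 := ⟨hL0 hx, by simpa using hx⟩
  have := S.term_succ_inf_homog_le hL0 0 0 hx'
  rw [hdeep] at this
  exact (sup_le hsq le_rfl) this

theorem commute_R_of_mem_L1 (hL0 : S.L0 ≤ S.term 1) {s : ℕ} (hnil : S.HasNilindex s)
    (hs : 3 < s) (hx : x ∈ S.L0) (hxnot : x ∉ S.bracketSpan S.L0 S.L0)
    (hreg : ∀ k, finrank ℂ (S.L0.map (S.R x ^ k)) = finrank ℂ S.L0 - k) {a : L}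
    (ha : a ∈ S.L1) : Commute (S.R a) (S.R x) := by
  have hcoeff (a b : S.L1) : ∃ c : ℂ, S.bracket b a - c • x ∈ S.L0.map (S.R x) :=
    S.exists_sub_smul_mem_map hx hxnot hreg (S.g11 _ b.2 _ a.2)
  choose N hN using hcoeff
  refine commute_of_add_mul_eq_smul (fun a : S.L1 => S.R a) (S.R x) N (fun a b => ?_) ?_ ⟨a, ha⟩
  · rw [S.R_anticomm a.2 b.2, S.R_eq_smul_of_sub_smul_mem hx hxnot hreg (hN a b)]
  · obtain ⟨a', ha', b', hb', hab⟩ := S.exists_bracket_not_mem_map hL0 hnil hs hx hxnot hreg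
    refine ⟨⟨b', hb'⟩, ⟨a', ha'⟩, fun h0 => hab ?_⟩
    simpa [h0] using hN ⟨b', hb'⟩ ⟨a', ha'⟩

theorem exists_R_pow_bracket_not_mem_term (hL0 : S.L0 ≤ S.term 1) {s : ℕ}
    (hnil : S.HasNilindex s) {j : ℕ} (hs : 2 * j + 4 ≤ s) (hx : x ∈ S.L0)
    (hxnot : x ∉ S.bracketSpan S.L0 S.L0)
    (hreg : ∀ k, finrank ℂ (S.L0.map (S.R x ^ k)) = finrank ℂ S.L0 - k)
    (hkill : ∀ v ∈ S.L1, (S.R x ^ (j + 1)) v = 0) :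
    ∃ d ∈ S.L1, (S.R x ^ j) (S.bracket x d) ∉ S.term (2 * j + 3) := by
  by_contra! h
  have hlt := S.term_succ_inf_homog_lt hL0 hnil (k := 2 * j + 2) (by omega)
  rw [S.homog_of_not_even (by simp [parity_simps])] at hlt
  refine hlt.not_ge (le_inf ?_ inf_le_right)
  -- modulo `S.term (2 * j + 3)`, `S.term (2 * j + 2) ⊓ S.L1` is spanned by the `R_x ^ j [x, a]`
  have hle := S.term_succ_inf_homog_le hL0 (2 * j + 1) 1
  rw [homog_one, S.homog_of_even (by decide), S.term_inf_L0_eq_map_pow hL0 hnil hx hreg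
    (by omega)] at hle
  refine hle.trans (sup_le (S.bracketSpan_le.mpr ?_) inf_le_left)
  rintro _ ⟨v, hv, rfl⟩ a ha
  have hcomm := S.commute_R_of_mem_L1 hL0 hnil (by omega) hx hxnot hreg ha
  obtain ⟨c, w, hw, hvw⟩ : ∃ c : ℂ, ∃ w ∈ S.L0, v = c • x + S.R x w := by
    obtain ⟨c, w, hw, hw'⟩ := S.exists_sub_smul_mem_map hx hxnot hreg hv
    exact ⟨c, w, hw, by rw [hw']; abel⟩
  have key : S.bracket ((S.R x ^ j) v) a = c • (S.R x ^ j) (S.bracket x a) :=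
    calc S.bracket ((S.R x ^ j) v) a = (S.R x ^ j) (S.R a v) := by
          rw [← R_apply, ← Module.End.mul_apply, (hcomm.pow_right j).eq, Module.End.mul_apply]
      _ = (S.R x ^ j) (c • S.bracket x a + S.R x (S.R a w)) := by
          rw [hvw, map_add, map_smul, ← Module.End.mul_apply (S.R a), hcomm.eq]
          rfl
      _ = c • (S.R x ^ j) (S.bracket x a) + (S.R x ^ (j + 1)) (S.bracket w a) := by
          rw [map_add, map_smul, pow_succ, Module.End.mul_apply]
          rfl
      _ = c • (S.R x ^ j) (S.bracket x a) := by rw [hkill _ (S.g01 _ hw _ ha), add_zero]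
  rw [key]
  exact Submodule.smul_mem _ _ (h a ha)

theorem smul_add_smul_mem_term (hL0 : S.L0 ≤ S.term 1) (hx : x ∈ S.L0)
    (hxnot : x ∉ S.bracketSpan S.L0 S.L0)
    (hreg : ∀ k, finrank ℂ (S.L0.map (S.R x ^ k)) = finrank ℂ S.L0 - k) {j : ℕ}
    (hkill : ∀ v ∈ S.L1, (S.R x ^ (j + 1)) v = 0) {a b c : L} (ha : a ∈ S.L1) (hb : b ∈ S.L1)
    (hc : c ∈ S.L1) {κ κ' : ℂ} (hκ : S.bracket c b - κ • x ∈ S.L0.map (S.R x))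
    (hκ' : S.bracket c a - κ' • x ∈ S.L0.map (S.R x)) :
    κ • (S.R x ^ j) (S.bracket x a) + κ' • (S.R x ^ j) (S.bracket x b) ∈ S.term (2 * j + 3) := by
  -- apply `R_x ^ j` to `[c, [b, a]] = [[c, b], a] + [[c, a], b]`, whose left side is `ν • [c, x]`
  obtain ⟨ν, hν⟩ := S.exists_sub_smul_mem_map hx hxnot hreg (S.g11 b hb a ha)
  have hanti := congrArg (· c) (S.R_anticomm ha hb)
  simp only [S.R_eq_smul_of_sub_smul_mem hx hxnot hreg hν, LinearMap.add_apply,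
    Module.End.mul_apply, LinearMap.smul_apply, R_apply] at hanti
  have hdeep {w : L} (hw : w ∈ S.L0.map (S.R x)) (u : L) :
      (S.R x ^ j) (S.bracket w u) ∈ S.term (2 * j + 3) := by
    have hw3 : w ∈ S.term 3 := (S.map_R_pow_L0_le hL0 hx 1 (by rwa [pow_one])).1
    exact S.term_antitone (by omega) (S.R_pow_mem_term (hL0 hx) (S.bracket_mem_term_succ hw3 u) j)
  have hzero : (S.R x ^ j) (S.bracket (S.bracket c b) a + S.bracket (S.bracket c a) b) = 0 := by
    rw [hanti, map_smul, ← R_apply, ← Module.End.mul_apply, ← pow_succ, hkill c hc, smul_zero]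
  have e : κ • (S.R x ^ j) (S.bracket x a) + κ' • (S.R x ^ j) (S.bracket x b) =
      (S.R x ^ j) (S.bracket (S.bracket c b) a + S.bracket (S.bracket c a) b) -
        (S.R x ^ j) (S.bracket (S.bracket c b - κ • x) a) -
        (S.R x ^ j) (S.bracket (S.bracket c a - κ' • x) b) := by
    simp only [map_add, map_sub, map_smul, LinearMap.sub_apply, LinearMap.smul_apply]
    abel
  rw [e, hzero]
  exact sub_mem (sub_mem (zero_mem _) (hdeep hκ a)) (hdeep hκ' b)

theorem not_L0_le_term_one {s j : ℕ} (hnil : S.HasNilindex s) (hs : 2 * j + 4 ≤ s)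
    (hx : x ∈ S.L0) (hxnot : x ∉ S.bracketSpan S.L0 S.L0)
    (hreg : ∀ k, finrank ℂ (S.L0.map (S.R x ^ k)) = finrank ℂ S.L0 - k)
    (hkill : ∀ v ∈ S.L1, (S.R x ^ (j + 1)) v = 0) : ¬S.L0 ≤ S.term 1 := by
  intro hL0
  obtain ⟨d, hd, hξ⟩ := S.exists_R_pow_bracket_not_mem_term hL0 hnil hs hx hxnot hreg hkill
  obtain ⟨a, ha, b, hb, hab⟩ := S.exists_bracket_not_mem_map hL0 hnil (by omega) hx hxnot hreg
  obtain ⟨κ, hκ⟩ := S.exists_sub_smul_mem_map hx hxnot hreg (S.g11 a ha b hb)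
  obtain ⟨κ', hκ'⟩ := S.exists_sub_smul_mem_map hx hxnot hreg (S.g11 a ha d hd)
  have hκ'0 : κ' = 0 := by
    have h := S.smul_add_smul_mem_term hL0 hx hxnot hreg hkill hd hd ha hκ' hκ'
    rw [← add_smul] at h
    by_contra hne
    exact hξ ((Submodule.smul_mem_iff _ (by simpa [← two_mul] using hne)).mp h)
  have hκ0 : κ = 0 := by
    have h := S.smul_add_smul_mem_term hL0 hx hxnot hreg hkill hd hb ha hκ hκ'
    rw [hκ'0, zero_smul, add_zero] at h
    by_contra hne
    exact hξ ((Submodule.smul_mem_iff _ hne).mp h)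
  exact hab (by simpa [hκ0] using hκ)

end Regular

section RightMultiplication

variable {x : L}

theorem R0_pow_apply (hx : x ∈ S.L0) (k : ℕ) (v : S.L0) :
    ((S.R0 x hx ^ k) v : L) = (S.R x ^ k) v := by
  induction k with
  | zero => rfl
  | succ k ih => rw [pow_succ', Module.End.mul_apply, pow_succ', Module.End.mul_apply, ← ih]; rfl

theorem R1_pow_apply (hx : x ∈ S.L0) (k : ℕ) (v : S.L1) :
    ((S.R1 x hx ^ k) v : L) = (S.R x ^ k) v := by
  induction k with
  | zero => rfl
  | succ k ih => rw [pow_succ', Module.End.mul_apply, pow_succ', Module.End.mul_apply, ← ih]; rfl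

theorem finrank_map_R_pow_L0 [FiniteDimensional ℂ L] (hx : x ∈ S.L0) (k : ℕ) :
    finrank ℂ (S.L0.map (S.R x ^ k)) = finrank ℂ (LinearMap.range (S.R0 x hx ^ k)) := by
  have hcomp : (S.R x ^ k) ∘ₗ S.L0.subtype = S.L0.subtype ∘ₗ (S.R0 x hx ^ k) :=
    LinearMap.ext fun v => (S.R0_pow_apply hx k v).symm
  rw [← Submodule.finrank_map_subtype_eq, ← LinearMap.range_comp, ← hcomp, LinearMap.range_comp,
    Submodule.range_subtype]

theorem isNilpotent_R1 [FiniteDimensional ℂ L] (hL0 : S.L0 ≤ S.term 1) {s : ℕ}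
    (hnil : S.HasNilindex s) (hx : x ∈ S.L0) : IsNilpotent (S.R1 x hx) := by
  refine ⟨s, LinearMap.ext fun v => Subtype.ext ?_⟩
  have h := S.R_pow_mem_term (hL0 hx) (show (v : L) ∈ S.term 0 from Submodule.mem_top) s
  rw [hnil.term_eq_bot (by omega), Submodule.mem_bot] at h
  rw [R1_pow_apply, h]
  rfl

end RightMultiplication

end LeibnizSuper

open LeibnizSuper in
theorem generators_not_both_odd_general {L : Type*} [AddCommGroup L] [Module ℂ L]
    [FiniteDimensional ℂ L] (S : LeibnizSuper L) (n : ℕ) (ms : List ℕ)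
    (hn : Module.finrank ℂ S.L0 = n)
    (hcs : S.HasCharSeq [n] ms) (hm1 : ms.headI + 2 ≤ ms.sum)
    (hnil : S.HasNilindex (n + ms.sum)) :
    ¬ ∃ y y' : L, y ∈ S.L1 ∧ y' ∈ S.L1 ∧ S.Generates {y, y'} := by
  rintro ⟨y, y', hy, hy', hgen⟩
  have hL0 : S.L0 ≤ S.term 1 :=
    S.L0_le_term_one_of_generates (by rintro _ (rfl | rfl) <;> assumption) hgen
  obtain ⟨x, hx, hxnot, hxJ⟩ := hcs.1
  have hreg (k : ℕ) : finrank ℂ (S.L0.map (S.R x ^ k)) = finrank ℂ S.L0 - k := by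
    rw [S.finrank_map_R_pow_L0 hx, HasJordanType.finrank_range_pow hxJ hn k, hn]
  have hhead : 0 < ms.headI := by
    obtain ⟨_, _, _, hJ⟩ := hcs.2.2.1
    cases ms with
    | nil => simp at hm1
    | cons a _ => exact hJ.2.1 a List.mem_cons_self
  have hkill : ∀ v ∈ S.L1, (S.R x ^ (ms.sum - 3 + 1)) v = 0 := by
    have h := (S.R1 x hx).pow_headI_eq_zero (S.isNilpotent_R1 hL0 hnil hx) (hcs.2.2.2 x hx hxnot)
    intro v hv
    rw [← S.R1_pow_apply hx _ ⟨v, hv⟩, pow_eq_zero_of_le (by omega) h]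
    rfl
  have hs := hnil.le_two_mul_finrank_add_two hL0
  exact S.not_L0_le_term_one hnil (j := ms.sum - 3) (by omega) hx hxnot hreg hkill hL0

open LeibnizSuper in
/-- Theorem 4.1: a Leibniz superalgebra of nilindex `n + m` with characteristic
sequence `(n | m₁, …, m_k)` and `m₁ ≤ m − 2` cannot be generated by two elements
both lying in the odd part `L₁`. -/
theorem generators_not_both_odd {L : Type*} [AddCommGroup L] [Module ℂ L]
    [FiniteDimensional ℂ L] (S : LeibnizSuper L) (n : ℕ) (ms : List ℕ)
    (hne : ms ≠ [])
    (hn : Module.finrank ℂ S.L0 = n) (hm : Module.finrank ℂ S.L1 = ms.sum)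
    (hcs : S.HasCharSeq [n] ms) (hm1 : ms.headI + 2 ≤ ms.sum)
    (hnil : S.HasNilindex (n + ms.sum)) :
    ¬ ∃ y y' : L, y ∈ S.L1 ∧ y' ∈ S.L1 ∧ S.Generates {y, y'} :=
  generators_not_both_odd_general S n ms hn hcs hm1 hnil
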